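/- arXiv:2204.13466 — 2 statements merged into one kernel-verified Lean document; each statement's English description precedes it below -/
import Mathlib

section
/- Let 𝒞 be a clustering system on a finite set X. Then there exists a level-1 network N on X with 𝒞_N = 𝒞 if and only if 𝒞 is closed and satisfies property (L). -/
/-!
If the clusters of `u` and `v` overlap, then `u` and `v` are incomparable and share a leaf, so
paths from a minimal common ancestor of `u` and `v` down to the first common vertex `h` of paths
from `u` and from `v` to that leaf form an undirected cycle on which `h` is a non-maximal hybrid.
In a level-1 network `u` is then not a hybrid, and `h` is the same for every cluster overlapping
`C(u)`, since all these cycles lie in the block of the unique arc entering `u`. Hence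
`C(u) ∩ C(v) = C(h)` for all such `v`, which gives closedness and property (L).

Conversely, if `𝒞` is closed and satisfies (L), its Hasse diagram realises `𝒞`. A hybrid `z`
of it is the intersection of two overlapping covers, overlaps no cluster by (L), and therefore
separates the clusters below it from the rest of its block. By (L) again, every edge leaving the
down-set of the clusters `M` that overlap some cluster in exactly `z` ends in their least common
upper bound `T(z)` in `𝒞`. Two distinct non-maximal hybrids `z`, `w` of one block are then
impossible: one of the two covers of `w` in the block differs from `T(z)`, so it lies below such
an `M` for `z`, whence `T(w) ⊆ M ⊊ T(z)`; symmetrically `T(z) ⊊ T(w)`.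
-/

namespace PhyloNet

/-- A (rooted) network on a set `X` of taxa: a finite directed acyclic graph with a
unique vertex of indegree 0 (the root), whose vertices of outdegree 0 (the leaves)
are exactly the elements of `X` (via the injection `leafEmb`). -/
structure Network (X : Type) where
  V : Type
  [fintypeV : Fintype V]
  E : V → V → Prop
  leafEmb : X → V
  leafEmb_inj : Function.Injective leafEmb
  acyclic : ∀ u v : V, E u v → ¬ Relation.ReflTransGen E v u
  root_unique : ∃! r : V, ∀ u : V, ¬ E u r
  leaf_iff : ∀ v : V, (∀ w : V, ¬ E v w) ↔ ∃ x : X, leafEmb x = v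

attribute [instance] Network.fintypeV

variable {X : Type}

namespace Network

/-- `reach u v` : there is a directed path (possibly trivial) from `u` to `v`,
i.e. `v ⪯ u`. -/
def reach (N : Network X) : N.V → N.V → Prop := Relation.ReflTransGen N.E

/-- The cluster of a vertex: the set of leaves reachable from it. -/
def cluster (N : Network X) (v : N.V) : Set X := {x | N.reach v (N.leafEmb x)}

/-- The clustering system of a network. -/
def CS (N : Network X) : Set (Set X) := Set.range N.cluster

noncomputable def inDeg (N : Network X) (v : N.V) : ℕ := {u | N.E u v}.ncard
noncomputable def outDeg (N : Network X) (v : N.V) : ℕ := {w | N.E v w}.ncard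

def IsHybrid (N : Network X) (v : N.V) : Prop := 1 < N.inDeg v
def IsTreeVertex (N : Network X) (v : N.V) : Prop := N.inDeg v ≤ 1
def IsLeaf (N : Network X) (v : N.V) : Prop := ∀ w : N.V, ¬ N.E v w

/-- The arc `(u,w)` is a shortcut: `w ≺ v` for some child `v ≠ w` of `u`. -/
def IsShortcut (N : Network X) (u w : N.V) : Prop :=
  N.E u w ∧ ∃ v : N.V, N.E u v ∧ v ≠ w ∧ N.reach v w

def ShortcutFree (N : Network X) : Prop := ∀ u w : N.V, ¬ N.IsShortcut u w

/-- Path-cluster comparability. -/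
def PCC (N : Network X) : Prop :=
  ∀ u v : N.V, (N.reach u v ∨ N.reach v u) ↔
    (N.cluster u ⊆ N.cluster v ∨ N.cluster v ⊆ N.cluster u)

def SemiRegular (N : Network X) : Prop := N.ShortcutFree ∧ N.PCC

/-- `N` is regular iff `v ↦ C(v)` is a digraph isomorphism onto the Hasse diagram
of `𝒞_N` (ordered by inclusion). -/
def Regular (N : Network X) : Prop :=
  Function.Injective N.cluster ∧
  ∀ u v : N.V, N.E u v ↔
    (N.cluster v ⊂ N.cluster u ∧
      ¬ ∃ w : N.V, N.cluster v ⊂ N.cluster w ∧ N.cluster w ⊂ N.cluster u)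

def Separated (N : Network X) : Prop := ∀ v : N.V, N.IsHybrid v → N.outDeg v = 1

def Phylogenetic (N : Network X) : Prop := ¬ ∃ v : N.V, N.outDeg v = 1 ∧ N.inDeg v ≤ 1

def Binary (N : Network X) : Prop :=
  (∀ v : N.V, N.IsTreeVertex v → (N.IsLeaf v ∨ N.outDeg v = 2)) ∧
  (∀ v : N.V, N.IsHybrid v → N.inDeg v = 2 ∧ N.outDeg v = 1)

def TreeChild (N : Network X) : Prop :=
  ∀ v : N.V, ¬ N.IsLeaf v → ∃ u : N.V, N.E v u ∧ N.inDeg u = 1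

/-- The underlying undirected (simple) graph of a network. -/
def UG (N : Network X) : SimpleGraph N.V where
  Adj u v := u ≠ v ∧ (N.E u v ∨ N.E v u)
  symm := ⟨fun _ _ h => ⟨Ne.symm h.1, Or.symm h.2⟩⟩
  loopless := ⟨fun _ h => h.1 rfl⟩

/-- A set of vertices is biconnected if it induces a connected undirected graph
with no cutvertex. -/
def IsBiconn (N : Network X) (B : Set N.V) : Prop :=
  (N.UG.induce B).Connected ∧ ∀ v ∈ B, (N.UG.induce (B \ {v})).Preconnected

/-- A block: a maximal biconnected set of vertices. -/
def IsBlock (N : Network X) (B : Set N.V) : Prop :=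
  N.IsBiconn B ∧ ∀ B' : Set N.V, B ⊆ B' → N.IsBiconn B' → B' = B

/-- The set `B` contains an undirected cycle (`B` is a non-trivial block when it is
a block). -/
def HasCycleIn (N : Network X) (B : Set N.V) : Prop :=
  ∃ (v : N.V) (c : N.UG.Walk v v), c.IsCycle ∧ ∀ w ∈ c.support, w ∈ B

/-- Level-1: each block contains at most one hybrid vertex that is not
`⪯`-maximal in the block. -/
def Level1 (N : Network X) : Prop :=
  ∀ B : Set N.V, N.IsBlock B →
    Set.Subsingleton {v : N.V | v ∈ B ∧ N.IsHybrid v ∧ ∃ u ∈ B, u ≠ v ∧ N.reach u v}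

/-- The set `B` (with the edges of the underlying undirected graph between its
members) is exactly an undirected cycle. -/
def IsCycleSet (N : Network X) (B : Set N.V) : Prop :=
  ∃ (v : N.V) (c : N.UG.Walk v v), c.IsCycle ∧ (∀ w : N.V, w ∈ c.support ↔ w ∈ B) ∧
    ∀ u w : N.V, (N.UG.Adj u w ∧ u ∈ B ∧ w ∈ B) ↔ s(u, w) ∈ c.edges

/-- A galled tree: every non-trivial block is an undirected cycle. -/
def GalledTree (N : Network X) : Prop :=
  ∀ B : Set N.V, N.IsBlock B → N.HasCycleIn B → N.IsCycleSet B

/-- Quasi-binary: hybrid vertices have indegree 2 and outdegree 1, and the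
`⪯`-maximal vertex of every non-trivial block has outdegree 2. -/
def QuasiBinary (N : Network X) : Prop :=
  (∀ v : N.V, N.IsHybrid v → N.inDeg v = 2 ∧ N.outDeg v = 1) ∧
  ∀ B : Set N.V, N.IsBlock B → N.HasCycleIn B →
    ∀ v ∈ B, (∀ u ∈ B, N.reach u v → u = v) → N.outDeg v = 2

/-- `LCA A`: the `⪯`-minimal vertices among the common ancestors of `A`. -/
def LCA (N : Network X) (A : Set X) : Set N.V :=
  {v : N.V | A ⊆ N.cluster v ∧ ∀ u : N.V, A ⊆ N.cluster u → N.reach v u → u = v}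

/-- An lca-network: every nonempty set of leaves has a unique least common
ancestor. -/
def LcaNetwork (N : Network X) : Prop :=
  ∀ A : Set X, A.Nonempty → ∃ v : N.V, N.LCA A = {v}

/-- A strong lca-network. -/
def StrongLca (N : Network X) : Prop :=
  N.LcaNetwork ∧
  ∀ A : Set X, A.Nonempty → ∃ x ∈ A, ∃ y ∈ A, N.LCA ({x, y} : Set X) = N.LCA A

/-- Cluster networks in the sense of Huson & Rupp. -/
def ClusterNetwork (N : Network X) : Prop :=
  N.PCC ∧
  (∀ u v : N.V, N.cluster u = N.cluster v ↔
    (u = v ∨ (N.IsHybrid v ∧ N.E v u) ∨ (N.IsHybrid u ∧ N.E u v))) ∧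
  (∀ u v : N.V, N.E v u →
    ¬ ∃ w : N.V, N.cluster u ⊂ N.cluster w ∧ N.cluster w ⊂ N.cluster v) ∧
  (∀ v : N.V, N.IsHybrid v →
    ∃ u : N.V, N.E v u ∧ (∀ w : N.V, N.E v w → w = u) ∧ N.IsTreeVertex u)

/-- The multiplicity of a cluster in the cluster multiset `𝓜_N`. -/
noncomputable def multiplicity (N : Network X) (C : Set X) : ℕ :=
  Nat.card {v : N.V // N.cluster v = C}

/-- Isomorphism of networks on the same leaf set `X`, fixing every leaf. -/
def Isomorphic (N N' : Network X) : Prop :=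
  ∃ φ : N.V ≃ N'.V, (∀ u v : N.V, N.E u v ↔ N'.E (φ u) (φ v)) ∧
    ∀ x : X, φ (N.leafEmb x) = N'.leafEmb x

end Network

/-- A clustering system on `X`. -/
def IsClusteringSystem {X : Type} (𝒞 : Set (Set X)) : Prop :=
  ∅ ∉ 𝒞 ∧ Set.univ ∈ 𝒞 ∧ ∀ x : X, {x} ∈ 𝒞

/-- Two sets overlap if `A ∩ B ∉ {∅, A, B}`. -/
def Overlap {X : Type} (A B : Set X) : Prop :=
  (A ∩ B).Nonempty ∧ A ∩ B ≠ A ∧ A ∩ B ≠ B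

/-- Closed (under pairwise nonempty intersections). -/
def IsClosedCS {X : Type} (𝒞 : Set (Set X)) : Prop :=
  ∀ A ∈ 𝒞, ∀ B ∈ 𝒞, (A ∩ B).Nonempty → A ∩ B ∈ 𝒞

/-- Property (L). -/
def PropertyL {X : Type} (𝒞 : Set (Set X)) : Prop :=
  ∀ C₁ ∈ 𝒞, ∀ C₂ ∈ 𝒞, ∀ C₃ ∈ 𝒞, Overlap C₁ C₂ → Overlap C₁ C₃ → C₁ ∩ C₂ = C₁ ∩ C₃

/-- Weak hierarchy. -/
def WeakHierarchy {X : Type} (𝒞 : Set (Set X)) : Prop :=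
  ∀ C₁ ∈ 𝒞, ∀ C₂ ∈ 𝒞, ∀ C₃ ∈ 𝒞,
    C₁ ∩ C₂ ∩ C₃ = C₁ ∩ C₂ ∨ C₁ ∩ C₂ ∩ C₃ = C₁ ∩ C₃ ∨
    C₁ ∩ C₂ ∩ C₃ = C₂ ∩ C₃ ∨ C₁ ∩ C₂ ∩ C₃ = ∅

/-- Property (N3O): no three distinct pairwise overlapping clusters. -/
def N3O {X : Type} (𝒞 : Set (Set X)) : Prop :=
  ¬ ∃ C₁ ∈ 𝒞, ∃ C₂ ∈ 𝒞, ∃ C₃ ∈ 𝒞,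
    C₁ ≠ C₂ ∧ C₁ ≠ C₃ ∧ C₂ ≠ C₃ ∧ Overlap C₁ C₂ ∧ Overlap C₁ C₃ ∧ Overlap C₂ C₃

/-- Property (2-Inc). -/
def TwoInc {X : Type} (𝒞 : Set (Set X)) : Prop :=
  ∀ C ∈ 𝒞,
    {A : Set X | A ∈ 𝒞 ∧ A ⊂ C ∧ ∀ B ∈ 𝒞, B ⊂ C → A ⊆ B → A = B}.ncard ≤ 2 ∧
    {A : Set X | A ∈ 𝒞 ∧ C ⊂ A ∧ ∀ B ∈ 𝒞, C ⊂ B → B ⊆ A → A = B}.ncard ≤ 2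

/-- The intersection closure: all nonempty intersections of nonempty subfamilies. -/
def interClosure {X : Type} (𝒞 : Set (Set X)) : Set (Set X) :=
  {A : Set X | A.Nonempty ∧ ∃ S : Set (Set X), S ⊆ 𝒞 ∧ S.Nonempty ∧ A = ⋂₀ S}

lemma overlap_iff {A B : Set X} : Overlap A B ↔ (A ∩ B).Nonempty ∧ ¬ A ⊆ B ∧ ¬ B ⊆ A := by
  simp only [Overlap, ne_eq, Set.inter_eq_left, Set.inter_eq_right]

lemma Overlap.symm {A B : Set X} (h : Overlap A B) : Overlap B A := by
  rw [overlap_iff] at h ⊢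
  rw [Set.inter_comm]
  exact ⟨h.1, h.2.2, h.2.1⟩

open Relation

namespace Network

variable {N : Network X}

lemma ne_of_E {a b : N.V} (h : N.E a b) : a ≠ b := by
  rintro rfl
  exact N.acyclic a a h ReflTransGen.refl

lemma adj_of_E {a b : N.V} (h : N.E a b) : N.UG.Adj a b := ⟨ne_of_E h, Or.inl h⟩

lemma cluster_subset_of_reach {a b : N.V} (h : N.reach a b) : N.cluster b ⊆ N.cluster a :=
  fun _ hx => ReflTransGen.trans h hx

lemma isHybrid_iff {v : N.V} : N.IsHybrid v ↔ ∃ a b, N.E a v ∧ N.E b v ∧ a ≠ b := by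
  simp only [IsHybrid, inDeg, Set.one_lt_ncard (Set.toFinite _), Set.mem_ofPred_eq, exists_and_left]

lemma isStrictOrder_transGen (N : Network X) : IsStrictOrder N.V (TransGen N.E) where
  irrefl a h := by
    obtain ⟨b, hab, hba⟩ := TransGen.head'_iff.mp h
    exact N.acyclic a b hab hba
  trans _ _ _ := TransGen.trans

lemma exists_forall_reach (N : Network X) : ∃ r : N.V, ∀ v, N.reach r v := by
  have := N.isStrictOrder_transGen
  obtain ⟨r, -, hr⟩ := N.root_unique
  refine ⟨r, fun v => (Finite.wellFounded_of_trans_of_irrefl (TransGen N.E)).induction v ?_⟩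
  intro v ih
  by_cases hv : ∃ p, N.E p v
  · obtain ⟨p, hp⟩ := hv
    exact ReflTransGen.tail (ih p (.single hp)) hp
  · rw [hr v (by simpa using hv)]
    exact ReflTransGen.refl

lemma exists_minimal_common_ancestor (u v : N.V) :
    ∃ r, N.reach r u ∧ N.reach r v ∧
      ∀ y, N.reach r y → N.reach y u → N.reach y v → y = r := by
  have := N.isStrictOrder_transGen
  obtain ⟨r₀, hr₀⟩ := N.exists_forall_reach
  obtain ⟨r, ⟨hru, hrv⟩, hmin⟩ :=
    (Finite.wellFounded_of_trans_of_irrefl (Function.swap (TransGen N.E))).has_min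
      {w | N.reach w u ∧ N.reach w v} ⟨r₀, hr₀ u, hr₀ v⟩
  refine ⟨r, hru, hrv, fun y hry hyu hyv => ?_⟩
  rcases ReflTransGen.cases_head hry with rfl | ⟨c, hrc, hcy⟩
  · rfl
  · exact absurd (TransGen.head' hrc hcy) (hmin y ⟨hyu, hyv⟩)

lemma not_reach_of_overlap {u v : N.V} (h : Overlap (N.cluster u) (N.cluster v)) :
    ¬ N.reach u v :=
  fun huv => h.2.2 (Set.inter_eq_right.mpr (cluster_subset_of_reach huv))

def ConnIn (N : Network X) (K : Set N.V) (a b : N.V) : Prop :=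
  ∃ (ha : a ∈ K) (hb : b ∈ K), (N.UG.induce K).Reachable ⟨a, ha⟩ ⟨b, hb⟩

namespace ConnIn

variable {K : Set N.V} {a b c : N.V}

protected lemma refl (ha : a ∈ K) : N.ConnIn K a a := ⟨ha, ha, .refl _⟩

protected lemma symm (h : N.ConnIn K a b) : N.ConnIn K b a :=
  let ⟨ha, hb, r⟩ := h
  ⟨hb, ha, r.symm⟩

protected lemma trans (h : N.ConnIn K a b) (h' : N.ConnIn K b c) : N.ConnIn K a c :=
  let ⟨ha, _, r⟩ := h
  let ⟨_, hc, r'⟩ := h'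
  ⟨ha, hc, r.trans r'⟩

lemma of_adj (h : N.UG.Adj a b) (ha : a ∈ K) (hb : b ∈ K) : N.ConnIn K a b :=
  ⟨ha, hb, SimpleGraph.Adj.reachable (G := N.UG.induce K) h⟩

lemma mono {K' : Set N.V} (h : N.ConnIn K a b) (hK : K ⊆ K') : N.ConnIn K' a b :=
  let ⟨ha, hb, r⟩ := h
  ⟨hK ha, hK hb, r.map (SimpleGraph.induceHomOfLE N.UG hK).toHom⟩

lemma mem_of_adj_closed {S : Set N.V}
    (hS : ∀ x y, N.UG.Adj x y → x ∈ K → y ∈ K → x ∈ S → y ∈ S)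
    (h : N.ConnIn K a b) (haS : a ∈ S) : b ∈ S := by
  suffices ∀ {x y : K}, (N.UG.induce K).Walk x y → x.1 ∈ S → y.1 ∈ S from
    let ⟨_, _, ⟨w⟩⟩ := h
    this w haS
  intro x y w
  induction w with
  | nil => exact id
  | cons hxy _ ih => exact fun hx => ih (hS _ _ hxy (Subtype.prop _) (Subtype.prop _) hx)

lemma exists_adj (h : N.ConnIn K a b) (hab : a ≠ b) : ∃ c ∈ K, N.UG.Adj a c := by
  obtain ⟨_, _, ⟨w⟩⟩ := h
  cases w with
  | nil => exact absurd rfl hab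
  | @cons _ c _ hac _ => exact ⟨c, c.2, hac⟩

end ConnIn

lemma preconnected_induce_iff {K : Set N.V} :
    (N.UG.induce K).Preconnected ↔ ∀ a ∈ K, ∀ b ∈ K, N.ConnIn K a b :=
  ⟨fun h _ ha _ hb => ⟨ha, hb, h _ _⟩, fun h x y => (h x x.2 y y.2).2.2⟩

namespace IsBiconn

variable {B : Set N.V} {a b : N.V}

lemma connIn (hB : N.IsBiconn B) (ha : a ∈ B) (hb : b ∈ B) : N.ConnIn B a b :=
  preconnected_induce_iff.mp hB.1.preconnected a ha b hb

lemma connIn_diff (hB : N.IsBiconn B) (g : N.V) (ha : a ∈ B \ {g}) (hb : b ∈ B \ {g}) :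
    N.ConnIn (B \ {g}) a b := by
  by_cases hg : g ∈ B
  · exact preconnected_induce_iff.mp (hB.2 g hg) a ha b hb
  · rw [Set.sdiff_singleton_eq_self hg] at ha hb ⊢
    exact hB.connIn ha hb

lemma mem_of_separating (hB : N.IsBiconn B) {S : Set N.V} {g : N.V} (hgS : g ∉ S)
    (hsep : ∀ x y, N.UG.Adj x y → x ∈ S → y ∉ S → y = g)
    (ha : a ∈ B) (haS : a ∈ S) (hb : b ∈ B) (hbg : b ≠ g) : b ∈ S := by
  refine (hB.connIn_diff g ⟨ha, fun h => hgS (h ▸ haS)⟩ ⟨hb, hbg⟩).mem_of_adj_closed ?_ haS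
  intro x y hxy _ hy hxS
  by_contra hyS
  exact hy.2 (hsep x y hxy hxS hyS)

lemma union {B' : Set N.V} (hB : N.IsBiconn B) (hB' : N.IsBiconn B')
    (ha : a ∈ B) (ha' : a ∈ B') (hb : b ∈ B) (hb' : b ∈ B') (hab : a ≠ b) :
    N.IsBiconn (B ∪ B') := by
  refine ⟨(SimpleGraph.connected_iff _).mpr ⟨preconnected_induce_iff.mpr ?_, ⟨⟨a, .inl ha⟩⟩⟩,
    fun v _ => preconnected_induce_iff.mpr ?_⟩
  · have hto : ∀ z ∈ B ∪ B', N.ConnIn (B ∪ B') z a := by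
      rintro z (hz | hz)
      · exact (hB.connIn hz ha).mono Set.subset_union_left
      · exact (hB'.connIn hz ha').mono Set.subset_union_right
    exact fun x hx y hy => (hto x hx).trans (hto y hy).symm
  · obtain ⟨s, hs, hs', hsv⟩ : ∃ s ∈ B, s ∈ B' ∧ s ≠ v := by
      by_cases hav : a = v
      · exact ⟨b, hb, hb', fun h => hab (hav.trans h.symm)⟩
      · exact ⟨a, ha, ha', hav⟩
    have hto : ∀ z ∈ (B ∪ B') \ {v}, N.ConnIn ((B ∪ B') \ {v}) z s := by
      rintro z ⟨hz | hz, hzv⟩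
      · exact (hB.connIn_diff v ⟨hz, hzv⟩ ⟨hs, hsv⟩).mono
          (Set.sdiff_subset_sdiff_left Set.subset_union_left)
      · exact (hB'.connIn_diff v ⟨hz, hzv⟩ ⟨hs', hsv⟩).mono
          (Set.sdiff_subset_sdiff_left Set.subset_union_right)
    exact fun x hx y hy => (hto x hx).trans (hto y hy).symm

lemma exists_isBlock (hB : N.IsBiconn B) : ∃ B', N.IsBlock B' ∧ B ⊆ B' := by
  obtain ⟨B', hB', hmax⟩ :=
    Set.Finite.exists_maximal (Set.toFinite {B' | N.IsBiconn B' ∧ B ⊆ B'}) ⟨B, hB, subset_rfl⟩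
  exact ⟨B', ⟨hB'.1, fun B'' hB'B'' hB'' =>
    (hmax ⟨hB'', hB'.2.trans hB'B''⟩ hB'B'').antisymm hB'B''⟩, hB'.2⟩

lemma exists_adj_adj (hB : N.IsBiconn B) {v t t' : N.V} (hv : v ∈ B) (ht : t ∈ B)
    (ht' : t' ∈ B) (htv : t ≠ v) (ht'v : t' ≠ v) (htt' : t ≠ t') :
    ∃ n₁ ∈ B, ∃ n₂ ∈ B, n₁ ≠ n₂ ∧ N.UG.Adj v n₁ ∧ N.UG.Adj v n₂ := by
  obtain ⟨n₁, hn₁, hvn₁⟩ := (hB.connIn hv ht).exists_adj htv.symm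
  obtain ⟨s, hs, hsv, hsn₁⟩ : ∃ s ∈ B, s ≠ v ∧ s ≠ n₁ := by
    by_cases htn₁ : t = n₁
    · exact ⟨t', ht', ht'v, fun h => htt' (htn₁.trans h.symm)⟩
    · exact ⟨t, ht, htv, htn₁⟩
  obtain ⟨n₂, hn₂, hvn₂⟩ :=
    (hB.connIn_diff n₁ ⟨hv, hvn₁.ne⟩ ⟨hs, hsn₁⟩).exists_adj hsv.symm
  exact ⟨n₁, hn₁, n₂, hn₂.1, fun h => hn₂.2 h.symm, hvn₁, hvn₂⟩

end IsBiconn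

inductive DirPath (N : Network X) : N.V → N.V → List N.V → Prop
  | single (v : N.V) : N.DirPath v v [v]
  | cons {u v w : N.V} {l : List N.V} : N.E u v → N.DirPath v w l → N.DirPath u w (u :: l)

namespace DirPath

variable {u w : N.V} {l : List N.V}

lemma head_mem (d : N.DirPath u w l) : u ∈ l := by
  cases d <;> exact List.mem_cons_self

lemma last_mem (d : N.DirPath u w l) : w ∈ l := by
  induction d with
  | single => exact List.mem_singleton_self _
  | cons _ _ ih => exact List.mem_cons_of_mem _ ih

lemma reach (d : N.DirPath u w l) : N.reach u w := by
  induction d with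
  | single => exact ReflTransGen.refl
  | cons h _ ih => exact ReflTransGen.head h ih

lemma reach_of_mem (d : N.DirPath u w l) {x : N.V} (hx : x ∈ l) :
    N.reach u x ∧ N.reach x w := by
  induction d with
  | single =>
      rw [List.mem_singleton.mp hx]
      exact ⟨ReflTransGen.refl, ReflTransGen.refl⟩
  | cons h d ih =>
      rcases List.mem_cons.mp hx with rfl | hx
      · exact ⟨ReflTransGen.refl, ReflTransGen.head h d.reach⟩
      · exact ⟨ReflTransGen.head h (ih hx).1, (ih hx).2⟩

lemma exists_of_reach (h : N.reach u w) : ∃ l, N.DirPath u w l := by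
  induction h using ReflTransGen.head_induction_on with
  | refl => exact ⟨_, .single w⟩
  | head h _ ih =>
      obtain ⟨l, d⟩ := ih
      exact ⟨_, .cons h d⟩

lemma append {v : N.V} {l' : List N.V} (d : N.DirPath u v l) (d' : N.DirPath v w l') :
    ∃ l'', N.DirPath u w l'' ∧ ∀ y, y ∈ l'' ↔ y ∈ l ∨ y ∈ l' := by
  induction d with
  | single =>
      refine ⟨l', d', fun y => ⟨Or.inr, ?_⟩⟩
      rintro (hy | hy)
      · exact List.mem_singleton.mp hy ▸ d'.head_mem
      · exact hy
  | cons h _ ih =>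
      obtain ⟨l'', d'', hl''⟩ := ih d'
      exact ⟨_, .cons h d'', fun y => by simp [hl'', or_assoc]⟩

lemma exists_prefix_first (d : N.DirPath u w l) {S : Set N.V} {s : N.V} (hs : s ∈ l)
    (hsS : s ∈ S) :
    ∃ h l', N.DirPath u h l' ∧ h ∈ S ∧ (∀ y ∈ l', y ∈ S → y = h) ∧ l' ⊆ l := by
  induction d with
  | single v =>
      exact ⟨v, [v], .single v, List.mem_singleton.mp hs ▸ hsS,
        fun y hy _ => List.mem_singleton.mp hy, List.Subset.refl _⟩
  | @cons a b c l hab _ ih =>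
      by_cases haS : a ∈ S
      · exact ⟨a, [a], .single a, haS, fun y hy _ => List.mem_singleton.mp hy,
          fun y hy => List.mem_singleton.mp hy ▸ List.mem_cons_self⟩
      · have hs' : s ∈ l := (List.mem_cons.mp hs).resolve_left fun h => haS (h ▸ hsS)
        obtain ⟨h, l', d', hhS, hfirst, hsub⟩ := ih hs'
        refine ⟨h, a :: l', .cons hab d', hhS, ?_, List.cons_subset_cons a hsub⟩
        rintro y hy hyS
        rcases List.mem_cons.mp hy with rfl | hy
        · exact absurd hyS haS
        · exact hfirst y hy hyS

lemma exists_prefix (d : N.DirPath u w l) {x : N.V} (hx : x ∈ l) :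
    ∃ l', N.DirPath u x l' ∧ l' ⊆ l := by
  obtain ⟨h, l', d', rfl, -, hsub⟩ := d.exists_prefix_first (S := {x}) hx rfl
  exact ⟨l', d', hsub⟩

lemma exists_parent_last (d : N.DirPath u w l) (huw : u ≠ w) :
    ∃ p ∈ l, p ≠ w ∧ N.E p w := by
  induction d with
  | single => exact absurd rfl huw
  | @cons a b c l hab d ih =>
      by_cases hbc : b = c
      · subst hbc
        exact ⟨a, List.mem_cons_self, huw, hab⟩
      · obtain ⟨p, hp, hpc, hpE⟩ := ih hbc
        exact ⟨p, List.mem_cons_of_mem _ hp, hpc, hpE⟩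

lemma connIn_head {K : Set N.V} (d : N.DirPath u w l) (hK : ∀ y ∈ l, y ∈ K) :
    ∀ c ∈ l, N.ConnIn K c u := by
  induction d with
  | single => exact fun c hc => List.mem_singleton.mp hc ▸ .refl (hK c hc)
  | @cons p q w l hpq d ih =>
      have hpK := hK p List.mem_cons_self
      have ih' := ih fun y hy => hK y (List.mem_cons_of_mem _ hy)
      intro c hc
      rcases List.mem_cons.mp hc with rfl | hc
      · exact .refl hpK
      · exact (ih' c hc).trans (.of_adj (adj_of_E hpq).symm (hK q (.tail _ d.head_mem)) hpK)

lemma connIn_end_of_ne {K : Set N.V} {t : N.V} (d : N.DirPath u w l)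
    (hK : ∀ y ∈ l, y ≠ t → y ∈ K) :
    ∀ c ∈ l, c ≠ t → (u ≠ t ∧ N.ConnIn K c u) ∨ (w ≠ t ∧ N.ConnIn K c w) := by
  induction d with
  | single =>
      intro c hc hct
      obtain rfl := List.mem_singleton.mp hc
      exact .inr ⟨hct, .refl (hK c hc hct)⟩
  | @cons p q w l hpq d ih =>
      intro c hc hct
      rcases List.mem_cons.mp hc with rfl | hc
      · exact .inl ⟨hct, .refl (hK c List.mem_cons_self hct)⟩
      by_cases hpt : p = t
      · subst hpt
        have hpl : p ∉ l := fun hp => N.acyclic p q hpq (d.reach_of_mem hp).1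
        have hlK : ∀ y ∈ l, y ∈ K := fun y hy =>
          hK y (.tail _ hy) fun hyp => hpl (hyp ▸ hy)
        exact .inr ⟨fun hwp => hpl (hwp ▸ d.last_mem),
          (d.connIn_head hlK c hc).trans (d.connIn_head hlK w d.last_mem).symm⟩
      · rcases ih (fun y hy => hK y (.tail _ hy)) c hc hct with ⟨hqt, hcq⟩ | hcw
        · exact .inl ⟨hpt, hcq.trans (.of_adj (adj_of_E hpq).symm
            (hK q (.tail _ d.head_mem) hqt) (hK p List.mem_cons_self hpt))⟩
        · exact .inr hcw

end DirPath

lemma isBiconn_of_dirPath {a b : N.V} {P Q : List N.V} (dP : N.DirPath a b P)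
    (dQ : N.DirPath a b Q) (hPQ : ∀ y ∈ P, y ∈ Q → y = a ∨ y = b) :
    N.IsBiconn {y | y ∈ P ∨ y ∈ Q} := by
  set S := {y | y ∈ P ∨ y ∈ Q}
  refine ⟨(SimpleGraph.connected_iff _).mpr ⟨preconnected_induce_iff.mpr ?_,
    ⟨⟨a, Or.inl dP.head_mem⟩⟩⟩, fun t _ => preconnected_induce_iff.mpr ?_⟩
  · have hto : ∀ c ∈ S, N.ConnIn S c a := by
      rintro c (hc | hc)
      · exact dP.connIn_head (fun y hy => Or.inl hy) c hc
      · exact dQ.connIn_head (fun y hy => Or.inr hy) c hc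
    exact fun x hx y hy => (hto x hx).trans (hto y hy).symm
  · set K := S \ {t}
    have hK : ∀ {y}, y ∈ P ∨ y ∈ Q → y ≠ t → y ∈ K := fun hy hyt => (Set.mem_sdiff _).mpr ⟨hy, hyt⟩
    have hend : ∀ c ∈ K, (a ≠ t ∧ N.ConnIn K c a) ∨ (b ≠ t ∧ N.ConnIn K c b) := by
      rintro c ⟨hc | hc, hct⟩
      · exact dP.connIn_end_of_ne (fun _ hy => hK (.inl hy)) c hc hct
      · exact dQ.connIn_end_of_ne (fun _ hy => hK (.inr hy)) c hc hct
    have hba : a ≠ t → b ≠ t → N.ConnIn K b a := by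
      intro hat hbt
      by_cases htP : t ∈ P
      · have htQ : t ∉ Q := fun htQ => (hPQ t htP htQ).elim (hat ·.symm) (hbt ·.symm)
        exact dQ.connIn_head (fun y hy => hK (.inr hy) fun h => htQ (h ▸ hy)) b dQ.last_mem
      · exact dP.connIn_head (fun y hy => hK (.inl hy) fun h => htP (h ▸ hy)) b dP.last_mem
    have hto : ∃ j, ∀ c ∈ K, N.ConnIn K c j := by
      by_cases hat : a = t
      · refine ⟨b, fun c hc => ?_⟩
        rcases hend c hc with ⟨hat', -⟩ | ⟨-, hcb⟩
        · exact absurd hat hat'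
        · exact hcb
      · refine ⟨a, fun c hc => ?_⟩
        rcases hend c hc with ⟨-, hca⟩ | ⟨hbt, hcb⟩
        · exact hca
        · exact hcb.trans (hba hat hbt)
    obtain ⟨j, hj⟩ := hto
    exact fun x hx y hy => (hj x hx).trans (hj y hy).symm

def IsNonmaxHybrid (N : Network X) (B : Set N.V) (v : N.V) : Prop :=
  v ∈ B ∧ N.IsHybrid v ∧ ∃ u ∈ B, u ≠ v ∧ N.reach u v

lemma IsNonmaxHybrid.mono {B B' : Set N.V} {v : N.V} (h : N.IsNonmaxHybrid B v)
    (hBB' : B ⊆ B') : N.IsNonmaxHybrid B' v :=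
  let ⟨hv, hhyb, u, hu, huv, hr⟩ := h
  ⟨hBB' hv, hhyb, u, hBB' hu, huv, hr⟩

lemma exists_cycle_hybrid {u v y : N.V} (huv : ¬ N.reach u v) (hvu : ¬ N.reach v u)
    (hu : N.reach u y) (hv : N.reach v y) :
    ∃ S p h, N.IsBiconn S ∧ N.E p u ∧ p ∈ S ∧ u ∈ S ∧ N.IsNonmaxHybrid S h ∧
      N.reach u h ∧ N.reach v h ∧ N.reach h y := by
  obtain ⟨r, hru, hrv, hrmin⟩ := N.exists_minimal_common_ancestor u v
  obtain ⟨l₁, d₁⟩ := DirPath.exists_of_reach hru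
  obtain ⟨l₄, d₄⟩ := DirPath.exists_of_reach hrv
  obtain ⟨lu, du⟩ := DirPath.exists_of_reach hu
  obtain ⟨lv, dv⟩ := DirPath.exists_of_reach hv
  obtain ⟨h, l₂, d₂, hhv, hfirst, -⟩ :=
    du.exists_prefix_first (S := {z | z ∈ lv}) du.last_mem dv.last_mem
  obtain ⟨l₃, d₃, hl₃⟩ := dv.exists_prefix hhv
  obtain ⟨P, dP, hP⟩ := d₁.append d₂
  obtain ⟨Q, dQ, hQ⟩ := d₄.append d₃
  have hPQ : ∀ z ∈ P, z ∈ Q → z = r ∨ z = h := by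
    intro z hzP hzQ
    rcases (hP z).mp hzP with hz₁ | hz₂ <;> rcases (hQ z).mp hzQ with hz₄ | hz₃
    · exact .inl (hrmin z (d₁.reach_of_mem hz₁).1 (d₁.reach_of_mem hz₁).2 (d₄.reach_of_mem hz₄).2)
    · exact absurd (ReflTransGen.trans (d₃.reach_of_mem hz₃).1 (d₁.reach_of_mem hz₁).2) hvu
    · exact absurd (ReflTransGen.trans (d₂.reach_of_mem hz₂).1 (d₄.reach_of_mem hz₄).2) huv
    · exact .inr (hfirst z hz₂ (hl₃ hz₃))
  have hru' : r ≠ u := fun hr => huv (hr ▸ hrv)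
  have huh : u ≠ h := fun hu => hvu (hu ▸ (dv.reach_of_mem hhv).1)
  have hvh : v ≠ h := fun hv => huv (hv ▸ d₂.reach)
  obtain ⟨p, hp, -, hpu⟩ := d₁.exists_parent_last hru'
  obtain ⟨a, ha, hah, hahE⟩ := d₂.exists_parent_last huh
  obtain ⟨b, hb, hbh, hbhE⟩ := d₃.exists_parent_last hvh
  have hab : a ≠ b := fun hab => hah (hfirst a ha (hab ▸ hl₃ hb))
  have huS : u ∈ {z | z ∈ P ∨ z ∈ Q} := Or.inl ((hP u).mpr (.inl d₁.last_mem))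
  refine ⟨_, p, h, isBiconn_of_dirPath dP dQ hPQ, hpu, Or.inl ((hP p).mpr (.inl hp)), huS,
    ⟨Or.inl ((hP h).mpr (.inr d₂.last_mem)), isHybrid_iff.mpr ⟨a, b, hahE, hbhE, hab⟩,
      u, huS, huh, d₂.reach⟩,
    d₂.reach, d₃.reach, (dv.reach_of_mem hhv).2⟩

lemma exists_cycle_hybrid_of_overlap {u v : N.V} (huv : Overlap (N.cluster u) (N.cluster v))
    {x : X} (hx : x ∈ N.cluster u ∩ N.cluster v) :
    ∃ S p h, N.IsBiconn S ∧ N.E p u ∧ p ∈ S ∧ u ∈ S ∧ N.IsNonmaxHybrid S h ∧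
      N.reach u h ∧ N.reach v h ∧ x ∈ N.cluster h :=
  exists_cycle_hybrid (not_reach_of_overlap huv) (not_reach_of_overlap huv.symm) hx.1 hx.2

lemma Level1.eq_of_isBiconn (hN : N.Level1) {S : Set N.V} (hS : N.IsBiconn S) {a b : N.V}
    (ha : N.IsNonmaxHybrid S a) (hb : N.IsNonmaxHybrid S b) : a = b := by
  obtain ⟨B, hB, hSB⟩ := hS.exists_isBlock
  exact hN B hB (ha.mono hSB) (hb.mono hSB)

lemma Level1.not_isHybrid_of_overlap (hN : N.Level1) {u v : N.V}
    (huv : Overlap (N.cluster u) (N.cluster v)) : ¬ N.IsHybrid u := by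
  intro hu
  obtain ⟨x, hx⟩ := huv.1
  obtain ⟨S, p, h, hS, hpu, hpS, huS, hh, -, hvh, -⟩ := exists_cycle_hybrid_of_overlap huv hx
  obtain rfl : u = h := hN.eq_of_isBiconn hS ⟨huS, hu, p, hpS, ne_of_E hpu, .single hpu⟩ hh
  exact not_reach_of_overlap huv.symm hvh

lemma Level1.exists_inter_eq_cluster (hN : N.Level1) {u v : N.V}
    (huv : Overlap (N.cluster u) (N.cluster v)) :
    ∃ h, ∀ w, Overlap (N.cluster u) (N.cluster w) → N.cluster u ∩ N.cluster w = N.cluster h := by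
  have hu := hN.not_isHybrid_of_overlap huv
  obtain ⟨x₀, hx₀⟩ := huv.1
  obtain ⟨S₀, p₀, h₀, hS₀, hp₀, hp₀S, hu₀S, hh₀, -⟩ := exists_cycle_hybrid_of_overlap huv hx₀
  have huniq : ∀ {S p h}, N.IsBiconn S → N.E p u → p ∈ S → u ∈ S → N.IsNonmaxHybrid S h →
      h = h₀ := by
    intro S p h hS hp hpS huS hh
    obtain rfl : p = p₀ := by_contra fun hpp => hu (isHybrid_iff.mpr ⟨p, p₀, hp, hp₀, hpp⟩)
    exact hN.eq_of_isBiconn (hS.union hS₀ hpS hp₀S huS hu₀S (ne_of_E hp))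
      (hh.mono Set.subset_union_left) (hh₀.mono Set.subset_union_right)
  refine ⟨h₀, fun w huw => Set.Subset.antisymm (fun x hx => ?_) ?_⟩
  · obtain ⟨S, p, h, hS, hp, hpS, huS, hh, -, -, hxh⟩ := exists_cycle_hybrid_of_overlap huw hx
    exact huniq hS hp hpS huS hh ▸ hxh
  · obtain ⟨x, hx⟩ := huw.1
    obtain ⟨S, p, h, hS, hp, hpS, huS, hh, huh, hwh, -⟩ := exists_cycle_hybrid_of_overlap huw hx
    rw [← huniq hS hp hpS huS hh]
    exact Set.subset_inter (cluster_subset_of_reach huh) (cluster_subset_of_reach hwh)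

lemma Level1.isClosedCS (hN : N.Level1) : IsClosedCS N.CS := by
  rintro _ ⟨u, rfl⟩ _ ⟨v, rfl⟩ hne
  by_cases huv : N.cluster u ⊆ N.cluster v
  · rw [Set.inter_eq_left.mpr huv]
    exact ⟨u, rfl⟩
  by_cases hvu : N.cluster v ⊆ N.cluster u
  · rw [Set.inter_eq_right.mpr hvu]
    exact ⟨v, rfl⟩
  have hov : Overlap (N.cluster u) (N.cluster v) := overlap_iff.mpr ⟨hne, huv, hvu⟩
  obtain ⟨h, hh⟩ := hN.exists_inter_eq_cluster hov
  rw [hh v hov]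
  exact ⟨h, rfl⟩

lemma Level1.propertyL (hN : N.Level1) : PropertyL N.CS := by
  rintro _ ⟨u, rfl⟩ _ ⟨v, rfl⟩ _ ⟨w, rfl⟩ huv huw
  obtain ⟨h, hh⟩ := hN.exists_inter_eq_cluster huv
  rw [hh v huv, hh w huw]

end Network

section OverlapMembers

variable {𝒞 : Set (Set X)}

lemma IsClusteringSystem.nonempty (h𝒞 : IsClusteringSystem 𝒞) {A : Set X} (hA : A ∈ 𝒞) :
    A.Nonempty :=
  Set.nonempty_iff_ne_empty.mpr fun h => h𝒞.1 (h ▸ hA)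

lemma PropertyL.subset_of_overlap_inter (hL : PropertyL 𝒞) {r s w : Set X} (hr : r ∈ 𝒞)
    (hs : s ∈ 𝒞) (hw : w ∈ 𝒞) (hrs : Overlap r s) (hne : (r ∩ s ∩ w).Nonempty)
    (hrsw : ¬ r ∩ s ⊆ w) : w ⊆ r := by
  by_contra hwr
  have hrw : ¬ r ⊆ w := fun h => hrsw (Set.inter_subset_left.trans h)
  have hov : Overlap r w :=
    overlap_iff.mpr ⟨hne.mono (Set.inter_subset_inter_left _ Set.inter_subset_left), hrw, hwr⟩
  exact hrsw (hL r hr s hs w hw hrs hov ▸ Set.inter_subset_right)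

lemma PropertyL.not_overlap_inter (hL : PropertyL 𝒞) {p q w : Set X} (hp : p ∈ 𝒞) (hq : q ∈ 𝒞)
    (hpq : Overlap p q) (hw : w ∈ 𝒞) : ¬ Overlap (p ∩ q) w := by
  intro h
  obtain ⟨hne, hpqw, hwpq⟩ := overlap_iff.mp h
  have hwp := hL.subset_of_overlap_inter hp hq hw hpq hne hpqw
  rw [Set.inter_comm p q] at hne hpqw
  exact hwpq (Set.subset_inter hwp (hL.subset_of_overlap_inter hq hp hw hpq.symm hne hpqw))

def overlapMembers (𝒞 : Set (Set X)) (z : Set X) : Set (Set X) :=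
  {M | M ∈ 𝒞 ∧ ∃ M' ∈ 𝒞, Overlap M M' ∧ M ∩ M' = z}

variable {z M : Set X}

lemma nonempty_of_mem_overlapMembers (hM : M ∈ overlapMembers 𝒞 z) : z.Nonempty := by
  obtain ⟨-, M', -, hov, rfl⟩ := hM
  exact hov.1

lemma ssubset_of_mem_overlapMembers (hM : M ∈ overlapMembers 𝒞 z) : z ⊂ M := by
  obtain ⟨-, M', -, hov, rfl⟩ := hM
  exact Set.ssubset_iff_subset_ne.mpr ⟨Set.inter_subset_left, hov.2.1⟩

lemma ssubset_of_mem_upperBounds_overlapMembers {T : Set X} (hM : M ∈ overlapMembers 𝒞 z)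
    (hT : T ∈ upperBounds (overlapMembers 𝒞 z)) : M ⊂ T := by
  obtain ⟨hM𝒞, M', hM', hov, rfl⟩ := hM
  refine Set.ssubset_iff_subset_ne.mpr ⟨hT ⟨hM𝒞, M', hM', hov, rfl⟩, fun hMT => ?_⟩
  have hM'T : M' ⊆ T := hT ⟨hM', M, hM𝒞, hov.symm, Set.inter_comm _ _⟩
  exact (overlap_iff.mp hov).2.2 (hMT ▸ hM'T)

lemma PropertyL.eq_of_mem_overlapMembers (hL : PropertyL 𝒞) {z' : Set X}
    (hM : M ∈ overlapMembers 𝒞 z) (hM' : M ∈ overlapMembers 𝒞 z') : z = z' := by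
  obtain ⟨hM𝒞, M₁, hM₁, hov₁, rfl⟩ := hM
  obtain ⟨-, M₂, hM₂, hov₂, rfl⟩ := hM'
  exact hL M hM𝒞 M₁ hM₁ M₂ hM₂ hov₁ hov₂

lemma PropertyL.mem_overlapMembers_of_overlap (hL : PropertyL 𝒞) {b : Set X}
    (hM : M ∈ overlapMembers 𝒞 z) (hb : b ∈ 𝒞) (hMb : Overlap M b) :
    b ∈ overlapMembers 𝒞 z := by
  obtain ⟨hM𝒞, M', hM', hov, rfl⟩ := hM
  exact ⟨hb, M, hM𝒞, hMb.symm, by rw [Set.inter_comm, hL M hM𝒞 M' hM' b hb hov hMb]⟩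

lemma PropertyL.mem_overlapMembers_of_ssubset (hL : PropertyL 𝒞) {b : Set X}
    (hM : M ∈ overlapMembers 𝒞 z) (hb : b ∈ 𝒞) (hzb : z ⊂ b) (hbM : b ⊂ M) :
    b ∈ overlapMembers 𝒞 z := by
  obtain ⟨hM𝒞, M', hM', hov, rfl⟩ := hM
  have hM'M : M' ∈ overlapMembers 𝒞 (M ∩ M') :=
    ⟨hM', M, hM𝒞, hov.symm, Set.inter_comm _ _⟩
  refine hL.mem_overlapMembers_of_overlap hM'M hb (overlap_iff.mpr ⟨?_, ?_, ?_⟩)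
  · exact hov.1.mono (Set.subset_inter Set.inter_subset_right hzb.1)
  · exact fun h => (overlap_iff.mp hov).2.2 (h.trans hbM.1)
  · exact fun h => hzb.not_subset (Set.subset_inter hbM.1 h)

lemma PropertyL.mem_upperBounds_overlapMembers (hL : PropertyL 𝒞) {E : Set X} (hE : E ∈ 𝒞)
    (hzE : z ⊂ E) (hEz : E ∉ overlapMembers 𝒞 z) : E ∈ upperBounds (overlapMembers 𝒞 z) := by
  intro M hM
  by_contra hME
  by_cases hEM : E ⊆ M
  · exact hEz (hL.mem_overlapMembers_of_ssubset hM hE hzE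
      (Set.ssubset_iff_subset_ne.mpr ⟨hEM, fun h => hME h.symm.subset⟩))
  · have hne : (M ∩ E).Nonempty := (nonempty_of_mem_overlapMembers hM).mono
      (Set.subset_inter (ssubset_of_mem_overlapMembers hM).1 hzE.1)
    exact hEz (hL.mem_overlapMembers_of_overlap hM hE (overlap_iff.mpr ⟨hne, hME, hEM⟩))

lemma exists_isLeast_upperBounds_overlapMembers [Finite X] (huniv : Set.univ ∈ 𝒞)
    (hcl : IsClosedCS 𝒞) (hz : (overlapMembers 𝒞 z).Nonempty) :
    ∃ T, IsLeast (𝒞 ∩ upperBounds (overlapMembers 𝒞 z)) T := by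
  obtain ⟨T, hT, hmin⟩ := Set.Finite.exists_minimal (Set.toFinite (𝒞 ∩ upperBounds
    (overlapMembers 𝒞 z))) ⟨Set.univ, huniv, fun _ _ => Set.subset_univ _⟩
  refine ⟨T, hT, fun C hC => ?_⟩
  obtain ⟨M, hM⟩ := hz
  have hne : (T ∩ C).Nonempty := (nonempty_of_mem_overlapMembers hM).mono
    ((ssubset_of_mem_overlapMembers hM).1.trans (Set.subset_inter (hT.2 hM) (hC.2 hM)))
  have hTC : T ∩ C ∈ 𝒞 ∩ upperBounds (overlapMembers 𝒞 z) :=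
    ⟨hcl T hT.1 C hC.1 hne, fun M hM => Set.subset_inter (hT.2 hM) (hC.2 hM)⟩
  exact (hmin hTC Set.inter_subset_left).trans Set.inter_subset_right

end OverlapMembers

lemma reflTransGen_swap_covBy_iff {α : Type*} [PartialOrder α] [Finite α] {a b : α} :
    ReflTransGen (fun a b : α => b ⋖ a) a b ↔ b ≤ a := by
  classical
  have := Fintype.ofFinite α
  let := Fintype.toLocallyFiniteOrder (α := α)
  rw [← reflTransGen_swap]
  exact le_iff_reflTransGen_covBy.symm

section Hasse

variable {𝒞 : Set (Set X)}

lemma IsClosedCS.overlap_of_covBy (hcl : IsClosedCS 𝒞) {z p q : 𝒞} (hz : (z : Set X).Nonempty)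
    (hzp : z ⋖ p) (hzq : z ⋖ q) (hpq : p ≠ q) :
    Overlap (p : Set X) q ∧ (p : Set X) ∩ q = z := by
  have hzpq : (z : Set X) ⊆ p ∩ q := Set.subset_inter hzp.le hzq.le
  let r : 𝒞 := ⟨p ∩ q, hcl p p.2 q q.2 (hz.mono hzpq)⟩
  have hpq' : ¬ (p : Set X) ⊆ q := fun h => hzq.2 hzp.1 (lt_of_le_of_ne h hpq)
  have hqp' : ¬ (q : Set X) ⊆ p := fun h => hzp.2 hzq.1 (lt_of_le_of_ne h hpq.symm)
  have hrp : r < p := lt_of_le_of_ne Set.inter_subset_left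
    fun h => hpq' (Subtype.ext_iff.mp h ▸ Set.inter_subset_right)
  have hzr : z = r := by_contra fun h => hzp.2 (lt_of_le_of_ne hzpq h) hrp
  exact ⟨overlap_iff.mpr ⟨hz.mono hzpq, hpq', hqp'⟩, (Subtype.ext_iff.mp hzr).symm⟩

lemma le_of_covBy_of_not_overlap {C a b : 𝒞} (hC : ∀ w ∈ 𝒞, ¬ Overlap (C : Set X) w)
    (ha : (a : Set X).Nonempty) (hab : a ⋖ b ∨ b ⋖ a) (haC : a < C) : b ≤ C := by
  rcases hab with hab | hba
  · by_contra hbC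
    by_cases hCb : C ≤ b
    · exact hab.2 haC (lt_of_le_of_ne hCb fun h => hbC h.ge)
    · exact hC b b.2 (overlap_iff.mpr ⟨ha.mono (Set.subset_inter haC.le hab.le), hCb, hbC⟩)
  · exact hba.le.trans haC.le

lemma PropertyL.eq_of_covBy_of_mem_lowerClosure (hL : PropertyL 𝒞) {z T : Set X}
    (hT : IsLeast (𝒞 ∩ upperBounds (overlapMembers 𝒞 z)) T) {a b : 𝒞}
    (ha : (a : Set X).Nonempty) (hab : a ⋖ b ∨ b ⋖ a)
    (haz : (a : Set X) ∈ lowerClosure (overlapMembers 𝒞 z))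
    (hbz : (b : Set X) ∉ lowerClosure (overlapMembers 𝒞 z)) : (b : Set X) = T := by
  obtain ⟨M, hM, haM⟩ := haz
  rcases hab with hab | hba
  swap
  · exact (hbz ⟨M, hM, (show (b : Set X) ⊆ a from hba.le).trans haM⟩).elim
  have hbM : ¬ (b : Set X) ⊆ M := fun h => hbz ⟨M, hM, h⟩
  by_cases hMb : M ⊆ b
  · have hb : (b : Set X) ∉ overlapMembers 𝒞 z := fun h => hbz ⟨b, h, subset_rfl⟩
    have hTb : T ⊆ b := hT.2 ⟨b.2, hL.mem_upperBounds_overlapMembers b.2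
      ((ssubset_of_mem_overlapMembers hM).trans_subset hMb) hb⟩
    have haT : (a : Set X) ⊂ T :=
      haM.trans_lt (ssubset_of_mem_upperBounds_overlapMembers hM hT.1.2)
    by_contra hbT
    exact hab.2 (c := ⟨T, hT.1.1⟩) haT
      (lt_of_le_of_ne hTb fun h => hbT (congrArg Subtype.val h).symm)
  · have hov : Overlap M b := overlap_iff.mpr ⟨ha.mono (Set.subset_inter haM hab.le), hMb, hbM⟩
    exact (hbz ⟨b, hL.mem_overlapMembers_of_overlap hM b.2 hov, subset_rfl⟩).elim

variable [Finite X]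

/-- Reducible, so that instance search sees its vertex type as the poset `𝒞`. -/
@[reducible] noncomputable def hasseNetwork (𝒞 : Set (Set X)) (h𝒞 : IsClusteringSystem 𝒞) :
    Network X where
  V := 𝒞
  fintypeV := Fintype.ofFinite _
  E A B := B ⋖ A
  leafEmb x := ⟨{x}, h𝒞.2.2 x⟩
  leafEmb_inj _ _ h := Set.singleton_injective (Subtype.ext_iff.mp h)
  acyclic _ _ hAB hBA := (reflTransGen_swap_covBy_iff.mp hBA).not_gt hAB.lt
  root_unique := by
    refine ⟨⟨Set.univ, h𝒞.2.1⟩, fun A hA => hA.lt.not_ge (Set.subset_univ _), fun A hA => ?_⟩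
    by_contra hAU
    obtain ⟨B, hAB, -⟩ := exists_covBy_le_of_lt (lt_of_le_of_ne (b := (⟨Set.univ, h𝒞.2.1⟩ : 𝒞))
      (Set.subset_univ A.1) hAU)
    exact hA B hAB
  leaf_iff A := by
    constructor
    · intro hA
      obtain ⟨x, hx⟩ := h𝒞.nonempty A.2
      refine ⟨x, by_contra fun hxA => ?_⟩
      obtain ⟨B, -, hBA⟩ := exists_le_covBy_of_lt (lt_of_le_of_ne (a := (⟨{x}, h𝒞.2.2 x⟩ : 𝒞))
        (Set.singleton_subset_iff.mpr hx) hxA)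
      exact hA B hBA
    · rintro ⟨x, rfl⟩ B hB
      exact h𝒞.1 (Set.ssubset_singleton_iff.mp hB.lt ▸ B.2)

variable {h𝒞 : IsClusteringSystem 𝒞}

lemma hasseNetwork_reach_iff {A B : 𝒞} :
    (hasseNetwork 𝒞 h𝒞).reach A B ↔ (B : Set X) ⊆ A :=
  reflTransGen_swap_covBy_iff (α := 𝒞)

lemma hasseNetwork_cluster (A : 𝒞) : (hasseNetwork 𝒞 h𝒞).cluster A = A := by
  ext x
  exact hasseNetwork_reach_iff.trans Set.singleton_subset_iff

lemma hasseNetwork_CS : (hasseNetwork 𝒞 h𝒞).CS = 𝒞 := by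
  ext C
  refine ⟨?_, fun hC => ⟨⟨C, hC⟩, hasseNetwork_cluster _⟩⟩
  rintro ⟨A, rfl⟩
  exact (hasseNetwork_cluster A).symm ▸ A.2

end Hasse

section HasseLevel1

open Network

variable {𝒞 : Set (Set X)} [Finite X] {h𝒞 : IsClusteringSystem 𝒞}
  {B : Set (hasseNetwork 𝒞 h𝒞).V}

lemma IsClosedCS.hasseNetwork_exists_overlap_inter_eq (hcl : IsClosedCS 𝒞) {z : 𝒞}
    (hz : (hasseNetwork 𝒞 h𝒞).IsHybrid z) :
    ∃ p q : 𝒞, Overlap (p : Set X) q ∧ (p : Set X) ∩ q = z :=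
  let ⟨p, q, hzp, hzq, hpq⟩ := isHybrid_iff.mp hz
  ⟨p, q, hcl.overlap_of_covBy (h𝒞.nonempty z.2) hzp hzq hpq⟩

lemma PropertyL.hasseNetwork_not_lt_of_isNonmaxHybrid (hL : PropertyL 𝒞) (hcl : IsClosedCS 𝒞)
    (hB : (hasseNetwork 𝒞 h𝒞).IsBiconn B) {z : 𝒞}
    (hz : (hasseNetwork 𝒞 h𝒞).IsNonmaxHybrid B z) : ∀ c ∈ B, ¬ c < z := by
  obtain ⟨-, hz, u, hu, huz, hur⟩ := hz
  obtain ⟨p, q, hov, hpqz⟩ := hcl.hasseNetwork_exists_overlap_inter_eq hz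
  have hzo : ∀ w ∈ 𝒞, ¬ Overlap (z : Set X) w :=
    hpqz ▸ fun w hw => hL.not_overlap_inter p.2 q.2 hov hw
  intro c hc hcz
  have hzu : z < u := lt_of_le_of_ne (hasseNetwork_reach_iff.mp hur) huz.symm
  refine hzu.not_gt (hB.mem_of_separating (S := {w : 𝒞 | w < z}) (g := z) (lt_irrefl z)
    (fun x y hxy hx hy => ?_) hc hcz hu huz)
  exact ((le_of_covBy_of_not_overlap hzo (h𝒞.nonempty x.2) hxy.2.symm hx).lt_or_eq).resolve_left hy

lemma hasseNetwork_exists_covBy_covBy (hB : (hasseNetwork 𝒞 h𝒞).IsBiconn B) {z t t' : 𝒞}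
    (hz : z ∈ B) (hbelow : ∀ c ∈ B, ¬ c < z) (ht : t ∈ B) (ht' : t' ∈ B) (htz : t ≠ z)
    (ht'z : t' ≠ z) (htt' : t ≠ t') :
    ∃ Q₁ ∈ B, ∃ Q₂ ∈ B, Q₁ ≠ Q₂ ∧ z ⋖ Q₁ ∧ z ⋖ Q₂ := by
  obtain ⟨n₁, hn₁, n₂, hn₂, hn, hzn₁, hzn₂⟩ := hB.exists_adj_adj hz ht ht' htz ht'z htt'
  have hcov : ∀ n ∈ B, (hasseNetwork 𝒞 h𝒞).UG.Adj z n → z ⋖ n :=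
    fun n hn hzn => hzn.2.resolve_left fun hnz => hbelow n hn hnz.lt
  exact ⟨n₁, hn₁, n₂, hn₂, hn, hcov n₁ hn₁ hzn₁, hcov n₂ hn₂ hzn₂⟩

lemma PropertyL.hasseNetwork_mem_lowerClosure (hL : PropertyL 𝒞)
    (hB : (hasseNetwork 𝒞 h𝒞).IsBiconn B) {z T : Set X}
    (hT : IsLeast (𝒞 ∩ upperBounds (overlapMembers 𝒞 z)) T) {a Q : 𝒞} (ha : a ∈ B)
    (haz : (a : Set X) ∈ lowerClosure (overlapMembers 𝒞 z)) (hQ : Q ∈ B)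
    (hQT : (Q : Set X) ≠ T) : (Q : Set X) ∈ lowerClosure (overlapMembers 𝒞 z) :=
  hB.mem_of_separating (S := {b : 𝒞 | (b : Set X) ∈ lowerClosure (overlapMembers 𝒞 z)})
    (g := ⟨T, hT.1.1⟩)
    (fun ⟨_, hM, hTM⟩ => (ssubset_of_mem_upperBounds_overlapMembers hM hT.1.2).not_ge hTM)
    (fun x _ hxy hx hy => Subtype.ext
      (hL.eq_of_covBy_of_mem_lowerClosure hT (h𝒞.nonempty x.2) hxy.2.symm hx hy))
    ha haz hQ fun h => hQT (congrArg Subtype.val h)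

lemma PropertyL.hasseNetwork_upperBound_ssubset (hL : PropertyL 𝒞)
    (hB : (hasseNetwork 𝒞 h𝒞).IsBiconn B) {z w : 𝒞} {Tz Tw : Set X}
    (hTz : IsLeast (𝒞 ∩ upperBounds (overlapMembers 𝒞 z)) Tz)
    (hTw : IsLeast (𝒞 ∩ upperBounds (overlapMembers 𝒞 w)) Tw) (hzw : z ≠ w) (hz : z ∈ B)
    (hzM : (overlapMembers 𝒞 z).Nonempty) {Q₁ Q₂ : 𝒞} (hQ₁ : Q₁ ∈ B) (hQ₂ : Q₂ ∈ B)
    (hQ : Q₁ ≠ Q₂) (hwQ₁ : w ⋖ Q₁) (hwQ₂ : w ⋖ Q₂) : Tw ⊂ Tz := by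
  obtain ⟨Q, hQB, hwQ, hQT⟩ : ∃ Q ∈ B, w ⋖ Q ∧ (Q : Set X) ≠ Tz := by
    by_cases h : (Q₁ : Set X) = Tz
    · exact ⟨Q₂, hQ₂, hwQ₂, fun h' => hQ (Subtype.ext (h.trans h'.symm))⟩
    · exact ⟨Q₁, hQ₁, hwQ₁, h⟩
  obtain ⟨M₀, hM₀⟩ := hzM
  obtain ⟨M, hM, hQM⟩ := hL.hasseNetwork_mem_lowerClosure hB hTz hz
    ⟨M₀, hM₀, (ssubset_of_mem_overlapMembers hM₀).le⟩ hQB hQT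
  have hwM : (w : Set X) ⊂ M := (show (w : Set X) ⊂ Q from hwQ.lt).trans_le hQM
  have hMw : M ∉ overlapMembers 𝒞 w :=
    fun h => hzw (Subtype.ext (hL.eq_of_mem_overlapMembers hM h))
  exact (hTw.2 ⟨hM.1, hL.mem_upperBounds_overlapMembers hM.1 hwM hMw⟩).trans_lt
    (ssubset_of_mem_upperBounds_overlapMembers hM hTz.1.2)

theorem IsClosedCS.hasseNetwork_level1 (hcl : IsClosedCS 𝒞) (hL : PropertyL 𝒞) :
    (hasseNetwork 𝒞 h𝒞).Level1 := by
  intro B hB z₁ hz₁ z₂ hz₂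
  by_contra hne
  have hM : ∀ {z : 𝒞}, (hasseNetwork 𝒞 h𝒞).IsHybrid z → (overlapMembers 𝒞 z).Nonempty :=
    fun hz => let ⟨p, q, hov, hpqz⟩ := hcl.hasseNetwork_exists_overlap_inter_eq hz
      ⟨p, p.2, q, q.2, hov, hpqz⟩
  have hM₁ := hM hz₁.2.1
  have hM₂ := hM hz₂.2.1
  obtain ⟨T₁, hT₁⟩ := exists_isLeast_upperBounds_overlapMembers h𝒞.2.1 hcl hM₁
  obtain ⟨T₂, hT₂⟩ := exists_isLeast_upperBounds_overlapMembers h𝒞.2.1 hcl hM₂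
  have hbelow₁ := hL.hasseNetwork_not_lt_of_isNonmaxHybrid hcl hB.1 hz₁
  have hbelow₂ := hL.hasseNetwork_not_lt_of_isNonmaxHybrid hcl hB.1 hz₂
  obtain ⟨hz₁B, -, u, hu, huz₁, hur⟩ := hz₁
  have huz₂ : u ≠ z₂ := fun h =>
    hbelow₂ z₁ hz₁B (h ▸ lt_of_le_of_ne (hasseNetwork_reach_iff.mp hur) huz₁.symm)
  obtain ⟨Q₁, hQ₁, Q₂, hQ₂, hQ, hzQ₁, hzQ₂⟩ :=
    hasseNetwork_exists_covBy_covBy hB.1 hz₂.1 hbelow₂ hz₁B hu hne huz₂ huz₁.symm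
  obtain ⟨R₁, hR₁, R₂, hR₂, hR, hzR₁, hzR₂⟩ :=
    hasseNetwork_exists_covBy_covBy hB.1 hz₁B hbelow₁ hz₂.1 hu (Ne.symm hne) huz₁ huz₂.symm
  exact lt_asymm
    (hL.hasseNetwork_upperBound_ssubset hB.1 hT₁ hT₂ hne hz₁B hM₁ hQ₁ hQ₂ hQ hzQ₁ hzQ₂)
    (hL.hasseNetwork_upperBound_ssubset hB.1 hT₂ hT₁ (Ne.symm hne) hz₂.1 hM₂ hR₁ hR₂ hR hzR₁ hzR₂)

end HasseLevel1

/-- There exists a level-1 network `N` on `X` with `𝒞_N = 𝒞` iff the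
clustering system `𝒞` is closed and satisfies property (L). -/
theorem level1_iff_closed_and_propertyL (X : Type) [Fintype X] (𝒞 : Set (Set X))
    (h𝒞 : IsClusteringSystem 𝒞) :
    (∃ N : Network X, N.Level1 ∧ N.CS = 𝒞) ↔ (IsClosedCS 𝒞 ∧ PropertyL 𝒞) := by
  constructor
  · rintro ⟨N, hN, rfl⟩
    exact ⟨hN.isClosedCS, hN.propertyL⟩
  · rintro ⟨hcl, hL⟩
    exact ⟨hasseNetwork 𝒞 h𝒞, hcl.hasseNetwork_level1 hL, hasseNetwork_CS⟩

end PhyloNet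
end

section
/- A network N is regular if and only if N is semi-regular (i.e., shortcut-free and satisfying (PCC)) and no vertex of N has outdegree 1. -/
namespace PhyloNet

variable {X : Type}

/-!
Both sides force `v ↦ C(v)` to be injective and `⪯_N` to coincide with cluster inclusion.
For a regular network, strict inclusion in a finite family decomposes into Hasse arcs, and a
vertex with a single child would share its child's cluster. Conversely, (PCC) turns equal
clusters along a path into a shortcut unless the path is trivial, and once reachability is
cluster inclusion, an arc that is not a Hasse arc, or a Hasse arc that is not an arc, is
exactly a shortcut.
-/

theorem Relation.transGen_of_lt_of_hasse {V α : Type*} [Finite V] [PartialOrder α] (f : V → α)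
    {r : V → V → Prop}
    (hr : ∀ u v, f v < f u → (¬ ∃ w, f v < f w ∧ f w < f u) → r u v) :
    ∀ u v, f v < f u → Relation.TransGen r u v := by
  let lt : V → V → Prop := fun a b => f a < f b
  have : IsTrans V lt := ⟨fun _ _ _ => lt_trans⟩
  have : Std.Irrefl lt := ⟨fun _ => lt_irrefl _⟩
  intro u
  induction u using (Finite.wellFounded_of_trans_of_irrefl lt).induction with
  | _ u ih =>
  intro v hvu
  by_cases hcov : ∃ w, f v < f w ∧ f w < f u
  · obtain ⟨w, ⟨hvw, hwu⟩, hmax⟩ :=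
      Set.toFinite {w | f v < f w ∧ f w < f u} |>.exists_maximalFor f _ hcov
    refine .head (hr u w hwu ?_) (ih w hwu v hvw)
    rintro ⟨w', hww', hw'u⟩
    exact (hmax ⟨hvw.trans hww', hw'u⟩ hww'.le).not_gt hww'
  · exact .single (hr u v hvu hcov)

namespace Network

variable {N : Network X} {u v w : N.V}

lemma reach_of_E (h : N.E u v) : N.reach u v := .single h

lemma cluster_subset_of_reach_s1 (h : N.reach u v) : N.cluster v ⊆ N.cluster u :=
  fun _ hx => Relation.ReflTransGen.trans h hx

lemma ne_of_E_s1 (h : N.E u v) : u ≠ v := by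
  rintro rfl
  exact N.acyclic u u h .refl

lemma cluster_ssubset_of_E (hinj : Function.Injective N.cluster) (h : N.E u v) :
    N.cluster v ⊂ N.cluster u :=
  (cluster_subset_of_reach_s1 (reach_of_E h)).ssubset_of_ne fun he => ne_of_E_s1 h (hinj he).symm

lemma cluster_eq_of_unique_child (h : N.E v w) (huniq : ∀ u, N.E v u → u = w) :
    N.cluster v = N.cluster w := by
  refine (cluster_subset_of_reach_s1 (reach_of_E h)).antisymm' fun x hx => ?_
  rcases Relation.ReflTransGen.cases_head hx with hleaf | ⟨u, hvu, hux⟩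
  · exact absurd h ((N.leaf_iff v).2 ⟨x, hleaf.symm⟩ w)
  · rwa [← huniq u hvu]

lemma exists_unique_child_of_outDeg_eq_one (h : N.outDeg v = 1) :
    ∃ w, N.E v w ∧ ∀ u, N.E v u → u = w := by
  obtain ⟨w, hw⟩ := Set.ncard_eq_one.1 h
  exact ⟨w, Set.eq_singleton_iff_unique_mem.1 hw⟩

lemma exists_other_child_of_outDeg_ne_one (hout : N.outDeg u ≠ 1) (h : N.E u w) :
    ∃ w', N.E u w' ∧ w' ≠ w := by
  have hpos : 0 < N.outDeg u := (Set.ncard_pos (Set.toFinite _)).2 ⟨w, h⟩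
  have h1 : 1 < N.outDeg u := by omega
  exact Set.exists_ne_of_one_lt_ncard h1 w

lemma pcc_of_reach_iff (h : ∀ u v, N.reach u v ↔ N.cluster v ⊆ N.cluster u) : N.PCC := by
  intro u v
  rw [h, h, or_comm]

lemma reach_iff_of_pcc (hpcc : N.PCC) (hinj : Function.Injective N.cluster) :
    N.reach u v ↔ N.cluster v ⊆ N.cluster u := by
  refine ⟨cluster_subset_of_reach_s1, fun hvu => ?_⟩
  rcases (hpcc u v).2 (Or.inr hvu) with huv | hvu'
  · exact huv
  · exact hinj (hvu.antisymm (cluster_subset_of_reach_s1 hvu')) ▸ .refl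

namespace Regular

variable (hreg : N.Regular)
include hreg

lemma reach_of_cluster_ssubset (h : N.cluster v ⊂ N.cluster u) : N.reach u v :=
  (Relation.transGen_of_lt_of_hasse N.cluster
    (fun u v hvu hcov => (hreg.2 u v).2 ⟨hvu, hcov⟩) u v h).to_reflTransGen

lemma reach_iff : N.reach u v ↔ N.cluster v ⊆ N.cluster u := by
  refine ⟨cluster_subset_of_reach_s1, fun h => ?_⟩
  rcases h.eq_or_ssubset with he | hss
  · exact hreg.1 he ▸ .refl
  · exact hreg.reach_of_cluster_ssubset hss

lemma shortcutFree : N.ShortcutFree := by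
  rintro u w ⟨huw, v, huv, hvw, hreach⟩
  have hwv : N.cluster w ⊂ N.cluster v :=
    (cluster_subset_of_reach_s1 hreach).ssubset_of_ne fun he => hvw (hreg.1 he).symm
  exact ((hreg.2 u w).1 huw).2 ⟨v, hwv, cluster_ssubset_of_E hreg.1 huv⟩

lemma outDeg_ne_one (v : N.V) : N.outDeg v ≠ 1 := fun h => by
  obtain ⟨w, hvw, huniq⟩ := exists_unique_child_of_outDeg_eq_one h
  exact ne_of_E_s1 hvw (hreg.1 (cluster_eq_of_unique_child hvw huniq))

end Regular

/-- In a semi-regular network, a vertex `u` with a child `w` has a second child `w'`; both have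
clusters inside `C(u) = C(v) ⊆ C(w)`, so by (PCC) one of `w, w'` reaches the other, a shortcut. -/
lemma eq_of_reach_of_cluster_eq (hsr : N.SemiRegular) (hout : ∀ v, N.outDeg v ≠ 1)
    (h : N.reach u v) (he : N.cluster u = N.cluster v) : u = v := by
  rcases Relation.ReflTransGen.cases_head h with rfl | ⟨w, huw, hwv⟩
  · rfl
  obtain ⟨w', huw', hw'w⟩ := exists_other_child_of_outDeg_ne_one (hout u) huw
  have hsub : N.cluster w' ⊆ N.cluster w :=
    (cluster_subset_of_reach_s1 (reach_of_E huw')).trans (he ▸ cluster_subset_of_reach_s1 hwv)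
  rcases (hsr.2 w' w).2 (Or.inl hsub) with hw'w_reach | hww'_reach
  · exact absurd ⟨huw, w', huw', hw'w, hw'w_reach⟩ (hsr.1 u w)
  · exact absurd ⟨huw', w, huw, hw'w.symm, hww'_reach⟩ (hsr.1 u w')

lemma SemiRegular.injective_cluster (hsr : N.SemiRegular) (hout : ∀ v, N.outDeg v ≠ 1) :
    Function.Injective N.cluster := fun u v he => by
  rcases (hsr.2 u v).2 (Or.inl he.le) with huv | hvu
  · exact eq_of_reach_of_cluster_eq hsr hout huv he
  · exact (eq_of_reach_of_cluster_eq hsr hout hvu he.symm).symm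

lemma regular_of_shortcutFree_of_reach_iff (hsf : N.ShortcutFree)
    (hinj : Function.Injective N.cluster)
    (hreach : ∀ u v, N.reach u v ↔ N.cluster v ⊆ N.cluster u) : N.Regular := by
  refine ⟨hinj, fun u v => ⟨fun huv => ⟨cluster_ssubset_of_E hinj huv, ?_⟩, ?_⟩⟩
  · rintro ⟨w, hvw, hwu⟩
    rcases Relation.ReflTransGen.cases_head ((hreach u w).2 hwu.le) with
      rfl | ⟨w₁, huw₁, hw₁w⟩
    · exact hwu.ne rfl
    have hw₁v : w₁ ≠ v := by
      rintro rfl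
      exact hvw.not_subset (cluster_subset_of_reach_s1 hw₁w)
    exact hsf u v ⟨huv, w₁, huw₁, hw₁v, hw₁w.trans ((hreach w v).2 hvw.le)⟩
  · rintro ⟨hvu, hcov⟩
    rcases Relation.ReflTransGen.cases_head ((hreach u v).2 hvu.le) with rfl | ⟨w, huw, hwv⟩
    · exact absurd rfl hvu.ne
    rcases eq_or_ne w v with rfl | hwv_ne
    · exact huw
    refine absurd ⟨w, ?_, cluster_ssubset_of_E hinj huw⟩ hcov
    exact (cluster_subset_of_reach_s1 hwv).ssubset_of_ne fun he => hwv_ne (hinj he).symm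

end Network

theorem regular_iff_semiRegular_and_no_outdeg_one_general (X : Type)
    (N : Network X) :
    N.Regular ↔ (N.SemiRegular ∧ ∀ v : N.V, N.outDeg v ≠ 1) := by
  constructor
  · intro hreg
    exact ⟨⟨hreg.shortcutFree, Network.pcc_of_reach_iff fun _ _ => hreg.reach_iff⟩,
      hreg.outDeg_ne_one⟩
  · rintro ⟨hsr, hout⟩
    have hinj := hsr.injective_cluster hout
    exact Network.regular_of_shortcutFree_of_reach_iff hsr.1 hinj fun _ _ =>
      Network.reach_iff_of_pcc hsr.2 hinj

/-- A network is regular iff it is semi-regular and no vertex has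
outdegree 1. -/
theorem regular_iff_semiRegular_and_no_outdeg_one (X : Type) [Fintype X]
    (N : Network X) :
    N.Regular ↔ (N.SemiRegular ∧ ∀ v : N.V, N.outDeg v ≠ 1) :=
  regular_iff_semiRegular_and_no_outdeg_one_general X N

end PhyloNet
end
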